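/- arXiv:2412.17648 — 2 statements merged into one kernel-verified Lean document; each statement's English description precedes it below -/
import Mathlib

section
/- If G is a word-representable graph and b is a vertex of G such that the subgraph induced by the neighborhood N_G(b) contains an induced subgraph that is not a comparability graph, then considering the graph G₁ induced on N_G(b) ∪ {b}, G₁ is word-representable only if G[N_G(b)] is a comparability graph. In particular, in any word-representable graph, the neighborhood of every vertex induces a comparability graph. -/
section Defs

variable {V : Type*}

/-- Two letters alternate in a word: the subword over `{a,b}` has no equal consecutive letters. -/
def Alternates [DecidableEq V] (w : List V) (a b : V) : Prop :=
  (w.filter (fun x => decide (x = a ∨ x = b))).Chain' (· ≠ ·)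

/-- A word over the vertex set represents a graph: every vertex occurs, and two distinct
vertices are adjacent iff they alternate in the word. -/
def Represents [DecidableEq V] (w : List V) (G : SimpleGraph V) : Prop :=
  (∀ v : V, v ∈ w) ∧ ∀ a b : V, a ≠ b → (G.Adj a b ↔ Alternates w a b)

def WordRepresentable [DecidableEq V] (G : SimpleGraph V) : Prop :=
  ∃ w : List V, Represents w G

/-- Every letter occurs exactly `k` times. -/
def IsKUniform [DecidableEq V] (w : List V) (k : ℕ) : Prop :=
  ∀ v : V, w.count v = k

/-- `k` is the representation number of `G`. -/
def RepNumIs [DecidableEq V] (G : SimpleGraph V) (k : ℕ) : Prop :=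
  IsLeast {n : ℕ | ∃ w : List V, IsKUniform w n ∧ Represents w G} k

/-- `p` is a permutation of the vertex set (as a list). -/
def IsPermOn (p : List V) : Prop := p.Nodup ∧ ∀ v : V, v ∈ p

/-- `G` is representable by a concatenation of `k` permutations of its vertex set. -/
def PermRepresents [DecidableEq V] (G : SimpleGraph V) (k : ℕ) : Prop :=
  ∃ ps : List (List V), ps.length = k ∧ (∀ p ∈ ps, IsPermOn p) ∧ Represents ps.flatten G

/-- `k` is the permutation-representation number of `G`. -/
def PrnIs [DecidableEq V] (G : SimpleGraph V) (k : ℕ) : Prop :=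
  IsLeast {n : ℕ | PermRepresents G n} k

/-- A comparability graph: a graph admitting a transitive orientation of its edges. -/
def IsComparability (G : SimpleGraph V) : Prop :=
  ∃ lt : V → V → Prop, Transitive lt ∧ (∀ a b, lt a b → G.Adj a b) ∧
    (∀ a b, G.Adj a b → (lt a b ↔ ¬ lt b a))

/-- A module: every outside vertex is adjacent to all of `M` or to none of `M`. -/
def IsModule (G : SimpleGraph V) (M : Set V) : Prop :=
  ∀ x ∉ M, (∀ m ∈ M, G.Adj x m) ∨ (∀ m ∈ M, ¬ G.Adj x m)

end Defs

/-- The graph obtained from `G` by replacing the vertex `a` with the module `M`. -/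
def substGraph {W V' : Type*} (G : SimpleGraph W) (a : W) (M : SimpleGraph V') :
    SimpleGraph ({x : W // x ≠ a} ⊕ V') where
  Adj x y :=
    match x, y with
    | Sum.inl u, Sum.inl v => G.Adj u.1 v.1
    | Sum.inl u, Sum.inr _ => G.Adj u.1 a
    | Sum.inr _, Sum.inl v => G.Adj a v.1
    | Sum.inr u, Sum.inr v => M.Adj u v
  symm := by
    constructor
    rintro (u | u) (v | v) h
    · exact h.symm
    · exact h.symm
    · exact h.symm
    · exact h.symm
  loopless := by
    constructor
    rintro (u | u) h
    · exact G.loopless.irrefl _ h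
    · exact M.loopless.irrefl _ h

/-- The quotient graph of a modular partition: parts are adjacent iff completely adjacent. -/
def quotientGraph {V : Type*} (G : SimpleGraph V) {n : ℕ} (Mod : Fin n → Set V) :
    SimpleGraph (Fin n) where
  Adj i j := i ≠ j ∧ ∀ a ∈ Mod i, ∀ b ∈ Mod j, G.Adj a b
  symm := by
    constructor
    rintro i j ⟨hij, h⟩
    exact ⟨hij.symm, fun a ha b hb => (h b hb a ha).symm⟩
  loopless := by constructor; rintro i ⟨h, _⟩; exact h rfl

/-- The lexicographical product of two graphs. -/
def lexProd {V V' : Type*} (G : SimpleGraph V) (G' : SimpleGraph V') :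
    SimpleGraph (V × V') where
  Adj x y := G.Adj x.1 y.1 ∨ (x.1 = y.1 ∧ G'.Adj x.2 y.2)
  symm := by
    constructor
    rintro ⟨a, a'⟩ ⟨b, b'⟩ (h | ⟨h1, h2⟩)
    · exact Or.inl h.symm
    · exact Or.inr ⟨h1.symm, h2.symm⟩
  loopless := by
    constructor
    rintro ⟨a, a'⟩ (h | ⟨_, h⟩)
    · exact G.loopless.irrefl _ h
    · exact G'.loopless.irrefl _ h

/-!
If `w` represents `H` and `x` is a neighbour of `b`, then `x` and `b` alternate in `w`, so along
the prefixes of `w` the count difference `#x - #b` stays in `{0, 1}` (if `x` comes first) or in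
`{-1, 0}` (if `b` comes first). Subtracting one in the first case gives a potential with values in
`{-1, 0}` for every neighbour of `b`. Two letters alternate iff their count difference stays in
`{0, 1}` or in `{-1, 0}`, and for neighbours of `b` the same holds with potentials instead of
counts. Orienting `x → y` when the potential difference stays in `{0, 1}` is then transitive:
along `x → y → z` the difference is at most `2`, but two potentials in `{-1, 0}` differ by at
most `1`.
-/

section Leads

variable {V : Type*} [DecidableEq V]

def Leads (w : List V) (a c : V) : Prop :=
  ∀ n, (w.take n).count c ≤ (w.take n).count a ∧ (w.take n).count a ≤ (w.take n).count c + 1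

variable {w l : List V} {a b c x y : V}

lemma leads_cons_self (hac : a ≠ c) : Leads (a :: l) a c ↔ Leads l c a := by
  constructor
  · intro h n
    have := h (n + 1)
    simp only [List.take_succ_cons, List.count_cons_self, List.count_cons_of_ne hac] at this
    omega
  · rintro h (_ | n)
    · simp
    · have := h n
      simp only [List.take_succ_cons, List.count_cons_self, List.count_cons_of_ne hac]
      omega

lemma not_leads_cons_right (hac : a ≠ c) : ¬ Leads (c :: l) a c := fun h => by
  simpa [List.count_cons_of_ne hac.symm] using (h 1).1

lemma leads_cons_of_ne (hxa : x ≠ a) (hxc : x ≠ c) : Leads (x :: l) a c ↔ Leads l a c := by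
  constructor
  · intro h n
    simpa only [List.take_succ_cons, List.count_cons_of_ne hxa, List.count_cons_of_ne hxc]
      using h (n + 1)
  · rintro h (_ | n)
    · simp
    · simpa only [List.take_succ_cons, List.count_cons_of_ne hxa, List.count_cons_of_ne hxc]
        using h n

lemma filter_or_comm (l : List V) (a c : V) :
    l.filter (fun x => decide (x = a ∨ x = c)) = l.filter (fun x => decide (x = c ∨ x = a)) :=
  List.filter_congr fun _ _ => by simp only [or_comm]

lemma eq_or_eq_of_mem_head?_filter {h : V}
    (hh : h ∈ (w.filter fun y => decide (y = a ∨ y = c)).head?) : h = a ∨ h = c := by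
  simpa using (List.mem_filter.1 (List.mem_of_mem_head? hh)).2

lemma leads_iff_isChain_filter (hac : a ≠ c) :
    Leads w a c ↔ (w.filter fun x => decide (x = a ∨ x = c)).IsChain (· ≠ ·) ∧
      ∀ h ∈ (w.filter fun x => decide (x = a ∨ x = c)).head?, h = a := by
  induction w generalizing a c with
  | nil => simp [Leads]
  | cons x l ih =>
    by_cases hxa : x = a
    · subst hxa
      rw [leads_cons_self hac, ih hac.symm, List.filter_cons_of_pos (by simp), List.isChain_cons,
        filter_or_comm l c x]
      constructor
      · rintro ⟨hch, hhead⟩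
        exact ⟨⟨fun h hh => (hhead h hh ▸ hac), hch⟩, by simp⟩
      · rintro ⟨⟨hne, hch⟩, -⟩
        exact ⟨hch, fun h hh => (eq_or_eq_of_mem_head?_filter hh).resolve_left (hne h hh).symm⟩
    by_cases hxc : x = c
    · subst hxc
      simp [not_leads_cons_right hac, hxa]
    · rw [leads_cons_of_ne hxa hxc, ih hac, List.filter_cons_of_neg (by simp [hxa, hxc])]

theorem alternates_iff_leads_or_leads (hac : a ≠ c) :
    Alternates w a c ↔ Leads w a c ∨ Leads w c a := by
  rw [leads_iff_isChain_filter hac, leads_iff_isChain_filter hac.symm, filter_or_comm w c a]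
  have hmem : ∀ h ∈ (w.filter fun y => decide (y = a ∨ y = c)).head?, h = a ∨ h = c :=
    fun _ => eq_or_eq_of_mem_head?_filter
  show List.IsChain _ _ ↔ _
  generalize w.filter (fun y => decide (y = a ∨ y = c)) = F at hmem ⊢
  rcases F with _ | ⟨h, t⟩
  · simp
  · rcases hmem h rfl with rfl | rfl <;> simp [hac, hac.symm]

lemma not_mem_of_forall_count_take_eq (hac : a ≠ c)
    (h : ∀ n, (w.take n).count a = (w.take n).count c) : a ∉ w := by
  induction w with
  | nil => simp
  | cons x l ih =>
    have hx : x ≠ a ∧ x ≠ c := by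
      have := h 1
      by_cases hxa : x = a <;> by_cases hxc : x = c <;> simp_all
    rw [List.mem_cons, not_or]
    refine ⟨fun hax => hx.1 hax.symm, ih fun n => ?_⟩
    simpa only [List.take_succ_cons, List.count_cons_of_ne hx.1, List.count_cons_of_ne hx.2]
      using h (n + 1)

lemma leads_antisymm (hx : x ∈ w) (hxy : Leads w x y) (hyx : Leads w y x) : x = y := by
  by_contra hne
  exact not_mem_of_forall_count_take_eq hne (fun n => by have := hxy n; have := hyx n; omega) hx

lemma not_leads_of_leads_of_leads (hy : y ∈ w) (hyb : y ≠ b) (hxb : Leads w x b)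
    (hby : Leads w b y) : ¬ Leads w y x := fun hyx =>
  hyb <| leads_antisymm hy (fun n => by have := hxb n; have := hyx n; have := hby n; omega) hby

end Leads

section Potential

variable {W : Type*} [DecidableEq W] {w : List W} {b x y z : W}

open Classical in
noncomputable def potential (w : List W) (b x : W) (n : ℕ) : ℤ :=
  (w.take n).count x - (w.take n).count b - if Leads w x b then 1 else 0

def PotentialLeads (w : List W) (b x y : W) : Prop :=
  ∀ n, potential w b y n ≤ potential w b x n ∧ potential w b x n ≤ potential w b y n + 1

lemma potential_bounds (hxb : x ≠ b) (hx : Alternates w x b) (n : ℕ) :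
    -1 ≤ potential w b x n ∧ potential w b x n ≤ 0 := by
  unfold potential
  split_ifs with hlead
  · have := hlead n
    omega
  · have := ((alternates_iff_leads_or_leads hxb).1 hx).resolve_left hlead n
    omega

lemma PotentialLeads.trans (hxb : x ≠ b) (hzb : z ≠ b) (hx : Alternates w x b)
    (hz : Alternates w z b) (hxy : PotentialLeads w b x y) (hyz : PotentialLeads w b y z) :
    PotentialLeads w b x z := fun n => by
  have := potential_bounds hxb hx n
  have := potential_bounds hzb hz n
  have := hxy n
  have := hyz n
  omega

lemma PotentialLeads.antisymm (hx : x ∈ w) (hxy : PotentialLeads w b x y)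
    (hyx : PotentialLeads w b y x) : x = y := by
  have h0 : potential w b x 0 = potential w b y 0 := le_antisymm (hyx 0).1 (hxy 0).1
  by_contra hne
  refine not_mem_of_forall_count_take_eq hne (fun n => ?_) hx
  have := hxy n
  have := hyx n
  simp only [potential, List.take_zero, List.count_nil, Nat.cast_zero, zero_sub] at *
  omega

lemma leads_or_leads_of_potentialLeads (h : PotentialLeads w b x y) :
    Leads w x y ∨ Leads w y x := by
  have h0 := h 0
  unfold PotentialLeads potential at h h0
  by_cases hxL : Leads w x b <;> by_cases hyL : Leads w y b <;>
    simp only [hxL, hyL, if_true, if_false] at h h0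
  · exact Or.inl fun n => by have := h n; omega
  · simp at h0
  · exact Or.inr fun n => by have := h n; omega
  · exact Or.inl fun n => by have := h n; omega

lemma potentialLeads_or_potentialLeads_of_leads (hxw : x ∈ w) (hxb : x ≠ b)
    (hx : Alternates w x b) (h : Leads w x y) :
    PotentialLeads w b x y ∨ PotentialLeads w b y x := by
  unfold PotentialLeads potential
  by_cases hxL : Leads w x b <;> by_cases hyL : Leads w y b <;>
    simp only [hxL, hyL, if_true, if_false]
  · exact Or.inl fun n => by have := h n; omega
  · exact Or.inr fun n => by have := h n; omega
  · have hbx := ((alternates_iff_leads_or_leads hxb).1 hx).resolve_left hxL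
    exact absurd h (not_leads_of_leads_of_leads hxw hxb hyL hbx)
  · exact Or.inl fun n => by have := h n; omega

lemma alternates_iff_potentialLeads_or_potentialLeads (hxy : x ≠ y) (hxb : x ≠ b)
    (hyb : y ≠ b) (hxw : x ∈ w) (hyw : y ∈ w) (hx : Alternates w x b)
    (hy : Alternates w y b) :
    Alternates w x y ↔ PotentialLeads w b x y ∨ PotentialLeads w b y x := by
  rw [alternates_iff_leads_or_leads hxy]
  constructor
  · rintro (h | h)
    · exact potentialLeads_or_potentialLeads_of_leads hxw hxb hx h
    · exact (potentialLeads_or_potentialLeads_of_leads hyw hyb hy h).symm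
  · rintro (h | h)
    · exact leads_or_leads_of_potentialLeads h
    · exact (leads_or_leads_of_potentialLeads h).symm

end Potential

theorem Represents.isComparability_of_embedding {V W : Type*} [DecidableEq W] {w : List W}
    {G : SimpleGraph V} {H : SimpleGraph W} (hw : Represents w H) {b : W} (f : G ↪g H)
    (hf : ∀ v, H.Adj b (f v)) : IsComparability G := by
  have hne : ∀ v, f v ≠ b := fun v => (H.ne_of_adj (hf v)).symm
  have halt : ∀ v, Alternates w (f v) b := fun v => (hw.2 _ _ (hne v)).1 (hf v).symm
  have halt_iff : ∀ u v, f u ≠ f v →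
      (Alternates w (f u) (f v) ↔
        PotentialLeads w b (f u) (f v) ∨ PotentialLeads w b (f v) (f u)) := fun u v huv =>
    alternates_iff_potentialLeads_or_potentialLeads huv (hne u) (hne v) (hw.1 _) (hw.1 _)
      (halt u) (halt v)
  refine ⟨fun u v => G.Adj u v ∧ PotentialLeads w b (f u) (f v), ?_, fun u v h => h.1, ?_⟩
  · rintro u v x ⟨huv, hluv⟩ ⟨hvx, hlvx⟩
    have hlux := hluv.trans (hne u) (hne x) (halt u) (halt x) hlvx
    have hux : f u ≠ f x := fun h => G.ne_of_adj huv <| f.injective <|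
      hluv.antisymm (hw.1 _) (h ▸ hlvx)
    exact ⟨f.map_adj_iff.1 ((hw.2 _ _ hux).2 ((halt_iff u x hux).2 (Or.inl hlux))), hlux⟩
  · intro u v huv
    constructor
    · rintro ⟨-, h⟩ ⟨-, h'⟩
      exact G.ne_of_adj huv (f.injective (h.antisymm (hw.1 _) h'))
    · intro hn
      have hfuv : f u ≠ f v := f.injective.ne (G.ne_of_adj huv)
      rcases (halt_iff u v hfuv).1 ((hw.2 _ _ hfuv).1 (f.map_adj_iff.2 huv)) with h | h
      · exact ⟨huv, h⟩
      · exact absurd ⟨huv.symm, h⟩ hn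

theorem stmt5_general {V : Type*} [DecidableEq V] (G : SimpleGraph V) (b : V) :
    (WordRepresentable (G.induce (insert b (G.neighborSet b))) →
      IsComparability (G.induce (G.neighborSet b))) ∧
    (WordRepresentable G → IsComparability (G.induce (G.neighborSet b))) :=
  ⟨fun ⟨_, hw⟩ => hw.isComparability_of_embedding (b := ⟨b, Set.mem_insert _ _⟩)
      (G.induceHomOfLE (Set.subset_insert _ _)) fun v => v.2,
    fun ⟨_, hw⟩ =>
      hw.isComparability_of_embedding (SimpleGraph.Embedding.induce _) fun v => v.2⟩

/-- for `G₁` induced on `N_G(b) ∪ {b}`, word-representability of `G₁` forces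
`G[N_G(b)]` to be a comparability graph; in particular, in a word-representable graph every
neighborhood induces a comparability graph. -/
theorem stmt5 {V : Type*} [DecidableEq V] [Fintype V] (G : SimpleGraph V) (b : V) :
    (WordRepresentable (G.induce (insert b (G.neighborSet b))) →
      IsComparability (G.induce (G.neighborSet b))) ∧
    (WordRepresentable G → IsComparability (G.induce (G.neighborSet b))) :=
  stmt5_general G b
end

section
/- In a word-representable graph G, every non-trivial module M (a module with 2 ≤ |M| < |V(G)|) induces a comparability subgraph G[M], provided G is connected. -/
def UnitBand {ι : Type*} (f : ι → ℤ) : Prop :=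
  ∃ k : ℤ, ∀ i, k ≤ f i ∧ f i ≤ k + 1

theorem isComparability_of_unitBand {S ι : Type*} (H : SimpleGraph S) (f : S → ι → ℤ)
    (g : ι → ℤ) (hg : ∀ m, UnitBand fun i => f m i - g i)
    (hadj : ∀ a b, a ≠ b → (H.Adj a b ↔ UnitBand fun i => f a i - f b i))
    (hsep : ∀ a b k, (∀ i, f a i - f b i = k) → a = b) :
    IsComparability H := by
  choose c hc using hg
  simp only at hc
  obtain ⟨E, hE⟩ : ∃ E : S → ι → ℤ, ∀ m i, E m i = f m i - g i - c m := ⟨_, fun _ _ => rfl⟩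
  have hE01 : ∀ m i, 0 ≤ E m i ∧ E m i ≤ 1 := fun m i => by
    have := hc m i; have := hE m i; omega
  have eq_of_le_of_le : ∀ a b, (∀ i, E b i ≤ E a i) → (∀ i, E a i ≤ E b i) → a = b :=
    fun a b hab hba => hsep a b (c a - c b) fun i => by
      have := hab i; have := hba i; have := hE a i; have := hE b i; omega
  have unitBand_of_le : ∀ a b, (∀ i, E b i ≤ E a i) → UnitBand fun i => f a i - f b i :=
    fun a b hab => ⟨c a - c b, fun i => by
      dsimp only
      have := hab i; have := hE01 a i; have := hE01 b i; have := hE a i; have := hE b i; omega⟩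
  have le_or_le_of_unitBand : ∀ a b, (UnitBand fun i => f a i - f b i) →
      (∀ i, E b i ≤ E a i) ∨ ∀ i, E a i ≤ E b i := by
    rintro a b ⟨k, hk⟩
    simp only at hk
    by_cases h : 0 ≤ k - c a + c b
    · exact Or.inl fun i => by have := hk i; have := hE a i; have := hE b i; omega
    · exact Or.inr fun i => by have := hk i; have := hE a i; have := hE b i; omega
  refine ⟨fun a b => a ≠ b ∧ ∀ i, E b i ≤ E a i, ?_, ?_, ?_⟩
  · rintro a b d ⟨hab, hba⟩ ⟨-, hdb⟩
    refine ⟨fun had => hab (eq_of_le_of_le a b hba fun i => ?_), fun i => (hdb i).trans (hba i)⟩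
    subst had
    exact hdb i
  · rintro a b ⟨hab, hba⟩
    exact (hadj a b hab).2 (unitBand_of_le a b hba)
  · intro a b hab
    have hne := H.ne_of_adj hab
    constructor
    · rintro ⟨-, hba⟩ ⟨-, hab'⟩
      exact hne (eq_of_le_of_le a b hba hab')
    · intro hn
      rcases le_or_le_of_unitBand a b ((hadj a b hne).1 hab) with h | h
      · exact ⟨hne, h⟩
      · exact absurd ⟨hne.symm, h⟩ hn

section Words

variable {V : Type*} [DecidableEq V]

theorem alternates_iff_isChain {w : List V} {u v : V} :
    Alternates w u v ↔ (w.filter fun x => decide (x = u ∨ x = v)).IsChain (· ≠ ·) :=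
  Iff.rfl

theorem alternates_comm (w : List V) (u v : V) : Alternates w u v ↔ Alternates w v u := by
  simp only [alternates_iff_isChain, or_comm]

theorem Alternates.of_cons {y u v : V} {w : List V} (h : Alternates (y :: w) u v) :
    Alternates w u v := by
  rw [alternates_iff_isChain, List.filter_cons] at h
  split_ifs at h
  exacts [h.tail, h]

theorem Alternates.cons_or {u v : V} {w : List V} (huv : u ≠ v) (h : Alternates w u v) :
    Alternates (u :: w) u v ∨ Alternates (v :: w) u v := by
  rw [alternates_iff_isChain] at h
  rw [alternates_iff_isChain, alternates_iff_isChain, List.filter_cons_of_pos (by simp),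
    List.filter_cons_of_pos (by simp), List.isChain_cons, List.isChain_cons]
  by_cases hu : ∀ y ∈ (w.filter fun x => decide (x = u ∨ x = v)).head?, u ≠ y
  · exact Or.inl ⟨hu, h⟩
  · refine Or.inr ⟨fun y hy => ?_, h⟩
    push Not at hu
    obtain ⟨z, hz, rfl⟩ := hu
    rw [Option.mem_unique hy hz]
    exact huv.symm

theorem alternates_cons_iff {u v : V} (huv : u ≠ v) (w : List V) :
    Alternates (u :: w) u v ↔
      ∀ i, (w.take i).count u ≤ (w.take i).count v ∧ (w.take i).count v ≤ (w.take i).count u + 1 := by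
  induction w generalizing u v with
  | nil => simp [alternates_iff_isChain]
  | cons y w ih =>
    rw [← Nat.and_forall_add_one]
    simp only [List.take_zero, List.count_nil, le_refl, zero_le, true_and, List.take_succ_cons,
      List.count_cons]
    by_cases hyu : y = u
    · subst hyu
      exact iff_of_false (by simp [alternates_iff_isChain]) fun h => by simpa [huv] using h 0
    by_cases hyv : y = v
    · subst hyv
      have : Alternates (u :: y :: w) u y ↔ Alternates (y :: w) y u := by
        simp [alternates_iff_isChain, huv, or_comm]
      rw [this, ih huv.symm]
      refine forall_congr' fun i => ?_
      simp only [beq_iff_eq, hyu, ↓reduceIte, add_zero, BEq.rfl, add_le_add_iff_right]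
      omega
    · have : Alternates (u :: y :: w) u v ↔ Alternates (u :: w) u v := by
        simp [alternates_iff_isChain, hyu, hyv]
      rw [this, ih huv]
      simp [hyu, hyv]

theorem alternates_iff_unitBand {u v : V} (huv : u ≠ v) (w : List V) :
    Alternates w u v ↔ UnitBand fun i => ((w.take i).count u : ℤ) - (w.take i).count v := by
  constructor
  · intro h
    rcases h.cons_or huv with h | h
    · exact ⟨-1, fun i => by dsimp only; have := (alternates_cons_iff huv w).1 h i; omega⟩
    · rw [alternates_comm] at h
      exact ⟨0, fun i => by dsimp only; have := (alternates_cons_iff huv.symm w).1 h i; omega⟩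
  · rintro ⟨k, hk⟩
    simp only at hk
    have hk0 := hk 0
    simp only [List.take_zero, List.count_nil, CharP.cast_eq_zero, sub_self] at hk0
    obtain rfl | rfl : k = -1 ∨ k = 0 := by omega
    · exact ((alternates_cons_iff huv w).2 fun i => by have := hk i; omega).of_cons
    · rw [alternates_comm]
      exact ((alternates_cons_iff huv.symm w).2 fun i => by have := hk i; omega).of_cons

theorem eq_of_count_take_eq {a b : V} {w : List V} (ha : a ∈ w)
    (h : ∀ i, (w.take i).count a = (w.take i).count b) : a = b := by
  obtain ⟨s, t, rfl⟩ := List.append_of_mem ha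
  have hs := h s.length
  have hsa := h (s.length + 1)
  rw [List.take_left' rfl] at hs
  rw [List.take_length_add_append, List.take_succ_cons, List.take_zero, List.count_append,
    List.count_append, hs, List.count_singleton, List.count_singleton] at hsa
  simpa using hsa

end Words

theorem IsModule.exists_forall_adj {V : Type*} {G : SimpleGraph V} {M : Set V}
    (hmod : IsModule G M) (hc : G.Connected) (hne : M ≠ Set.univ) :
    ∃ x ∉ M, ∀ m ∈ M, G.Adj x m := by
  obtain ⟨y, hy⟩ := (Set.ne_univ_iff_exists_notMem M).1 hne
  rcases M.eq_empty_or_nonempty with rfl | ⟨m, hm⟩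
  · exact ⟨y, hy, by simp⟩
  obtain ⟨d, -, hd, hd'⟩ := (hc m y).some.exists_boundary_dart M hm hy
  exact ⟨d.snd, hd', (hmod d.snd hd').resolve_right fun h => h _ hd d.adj.symm⟩

theorem WordRepresentable.isComparability_induce_of_forall_adj {V : Type*} [DecidableEq V]
    {G : SimpleGraph V} (h : WordRepresentable G) {x : V} {S : Set V}
    (hS : ∀ m ∈ S, G.Adj x m) : IsComparability (G.induce S) := by
  obtain ⟨w, hw, hadj⟩ := h
  apply isComparability_of_unitBand (G.induce S) (fun m i => (w.take i).count (m : V))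
    (fun i => (w.take i).count x)
  · intro m
    have hmx := (hS m m.2).symm
    exact (alternates_iff_unitBand hmx.ne w).1 ((hadj m x hmx.ne).1 hmx)
  · intro a b hab
    rw [SimpleGraph.induce_adj, hadj a b (Subtype.coe_injective.ne hab)]
    exact alternates_iff_unitBand (Subtype.coe_injective.ne hab) w
  · intro a b k hk
    have hk0 := hk 0
    simp only [List.take_zero, List.count_nil, CharP.cast_eq_zero, sub_self] at hk0
    exact Subtype.ext (eq_of_count_take_eq (hw a) fun i => by have := hk i; omega)

theorem stmt15_general {V : Type*} [DecidableEq V] (G : SimpleGraph V)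
    (hc : G.Connected) (h : WordRepresentable G) (M : Set V)
    (hmod : IsModule G M) (hne : M ≠ Set.univ) :
    IsComparability (G.induce M) := by
  obtain ⟨x, -, hx⟩ := hmod.exists_forall_adj hc hne
  exact h.isComparability_induce_of_forall_adj hx

/-- in a connected word-representable graph, every non-trivial module induces
a comparability graph. -/
theorem stmt15 {V : Type*} [DecidableEq V] [Fintype V] (G : SimpleGraph V)
    (hc : G.Connected) (h : WordRepresentable G) (M : Set V)
    (hmod : IsModule G M) (h2 : 2 ≤ M.ncard) (hne : M ≠ Set.univ) :
    IsComparability (G.induce M) :=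
  stmt15_general G hc h M hmod hne
end
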